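/- Let A and B be real symmetric positive semidefinite d×d matrices. Then ‖A^{1/2} − B^{1/2}‖_F ≤ d^{1/4} ‖A − B‖_F^{1/2}. -/

import Mathlib

open Matrix Real

/-- The positive semidefinite square root of a positive semidefinite real matrix
(junk value `0` on matrices that are not positive semidefinite). -/
noncomputable def msqrt {d : ℕ} (A : Matrix (Fin d) (Fin d) ℝ) : Matrix (Fin d) (Fin d) ℝ :=
  open scoped Classical in
  if h : A.PosSemidef then h.1.eigenvectorUnitary.1 * diagonal ((↑) ∘ (√·) ∘ h.1.eigenvalues) *
    (star h.1.eigenvectorUnitary : Matrix (Fin d) (Fin d) ℝ) else 0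

/-- The squared Bures–Wasserstein distance
`B²(S,Q) = tr S + tr Q − 2 tr((S^{1/2} Q S^{1/2})^{1/2})`. -/
noncomputable def sqB {d : ℕ} (S Q : Matrix (Fin d) (Fin d) ℝ) : ℝ :=
  S.trace + Q.trace - 2 * (msqrt (msqrt S * Q * msqrt S)).trace

/-- The Bures–Wasserstein distance `B(S,Q)`. -/
noncomputable def bw {d : ℕ} (S Q : Matrix (Fin d) (Fin d) ℝ) : ℝ :=
  Real.sqrt (sqB S Q)

/-- The Frobenius (Hilbert–Schmidt) norm of a matrix. -/
noncomputable def frobNorm {d : ℕ} (A : Matrix (Fin d) (Fin d) ℝ) : ℝ :=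
  Real.sqrt (∑ i, ∑ j, (A i j) ^ 2)

/-- The spectral (`ℓ²`-operator) norm of a matrix. -/
noncomputable def opNorm {d : ℕ} (A : Matrix (Fin d) (Fin d) ℝ) : ℝ :=
  ‖Matrix.toEuclideanCLM (𝕜 := ℝ) A‖

/-- A correlation matrix: real symmetric positive semidefinite with unit diagonal. -/
def IsCorrMat {d : ℕ} (A : Matrix (Fin d) (Fin d) ℝ) : Prop :=
  A.PosSemidef ∧ ∀ i, A i i = 1

/-- The 2×2 correlation matrix with off-diagonal entry `ρ`. -/
def corr2 (ρ : ℝ) : Matrix (Fin 2) (Fin 2) ℝ := !![1, ρ; ρ, 1]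

/-- The Gaussian optimal transport matrix `T_Σ^Q = Σ^{-1/2} (Σ^{1/2} Q Σ^{1/2})^{1/2} Σ^{-1/2}`. -/
noncomputable def otMap {d : ℕ} (S Q : Matrix (Fin d) (Fin d) ℝ) : Matrix (Fin d) (Fin d) ℝ :=
  (msqrt S)⁻¹ * msqrt (msqrt S * Q * msqrt S) * (msqrt S)⁻¹

/-- Symmetric normalization `D(Σ)^{-1/2} Σ D(Σ)^{-1/2}` of a matrix by its diagonal. -/
noncomputable def symNormalize {d : ℕ} (S : Matrix (Fin d) (Fin d) ℝ) :
    Matrix (Fin d) (Fin d) ℝ :=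
  Matrix.diagonal (fun i => (Real.sqrt (S i i))⁻¹) * S *
    Matrix.diagonal (fun i => (Real.sqrt (S i i))⁻¹)

private lemma frob_sq_trace' {d : ℕ} (X : Matrix (Fin d) (Fin d) ℝ) :
    ∑ i, ∑ j, (X i j) ^ 2 = (Xᵀ * X).trace := by
  rw [Finset.sum_comm]
  simp [Matrix.trace, Matrix.mul_apply, Matrix.diag, sq]

private lemma psd_diag_nonneg' {d : ℕ} {X : Matrix (Fin d) (Fin d) ℝ}
    (hX : X.PosSemidef) (i : Fin d) : 0 ≤ X i i := by
  exact hX.diag_nonneg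

noncomputable def Matrix.PosSemidef.sqrt {d : ℕ} {A : Matrix (Fin d) (Fin d) ℝ} (h : A.PosSemidef) :
    Matrix (Fin d) (Fin d) ℝ :=
  h.1.eigenvectorUnitary.1 * diagonal ((↑) ∘ (√·) ∘ h.1.eigenvalues) *
    (star h.1.eigenvectorUnitary : Matrix (Fin d) (Fin d) ℝ)

lemma Matrix.PosSemidef.posSemidef_sqrt {d : ℕ} {A : Matrix (Fin d) (Fin d) ℝ}
    (h : A.PosSemidef) : h.sqrt.PosSemidef := by
  unfold Matrix.PosSemidef.sqrt
  have hD : (diagonal ((↑) ∘ (√·) ∘ h.1.eigenvalues) : Matrix (Fin d) (Fin d) ℝ).PosSemidef :=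
    posSemidef_diagonal_iff.2 (fun i => by simp [Real.sqrt_nonneg])
  have := hD.mul_mul_conjTranspose_same (h.1.eigenvectorUnitary.1)
  simpa [Matrix.star_eq_conjTranspose] using this

lemma Matrix.PosSemidef.sqrt_mul_self {d : ℕ} {A : Matrix (Fin d) (Fin d) ℝ}
    (h : A.PosSemidef) : h.sqrt * h.sqrt = A := by
  conv_rhs => rw [h.1.spectral_theorem, Unitary.conjStarAlgAut_apply]
  unfold Matrix.PosSemidef.sqrt
  have hUU : (star h.1.eigenvectorUnitary : Matrix (Fin d) (Fin d) ℝ) *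
      h.1.eigenvectorUnitary.1 = 1 := h.1.eigenvectorUnitary.2.1
  have hmid : diagonal ((↑) ∘ (√·) ∘ h.1.eigenvalues) *
      ((star h.1.eigenvectorUnitary : Matrix (Fin d) (Fin d) ℝ) * (h.1.eigenvectorUnitary.1 *
      (diagonal ((↑) ∘ (√·) ∘ h.1.eigenvalues) *
      (star h.1.eigenvectorUnitary : Matrix (Fin d) (Fin d) ℝ)))) =
      diagonal (RCLike.ofReal ∘ h.1.eigenvalues) *
      (star h.1.eigenvectorUnitary : Matrix (Fin d) (Fin d) ℝ) := by
    rw [← mul_assoc _ h.1.eigenvectorUnitary.1, hUU, one_mul, ← mul_assoc,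
      diagonal_mul_diagonal]
    congr 2
    funext i
    simp [Real.mul_self_sqrt (h.eigenvalues_nonneg i)]
  simp only [mul_assoc]
  rw [hmid]

/-- For real symmetric positive semidefinite `d×d` matrices `A, B`,
`‖A^{1/2} − B^{1/2}‖_F ≤ d^{1/4} ‖A − B‖_F^{1/2}`. -/
theorem msqrt_sub_frobNorm_le {d : ℕ} (A B : Matrix (Fin d) (Fin d) ℝ)
    (hA : A.PosSemidef) (hB : B.PosSemidef) :
    frobNorm (msqrt A - msqrt B) ≤ (d : ℝ) ^ ((1 : ℝ) / 4) * (frobNorm (A - B)) ^ ((1 : ℝ) / 2) := by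
  have hmA : msqrt A = hA.sqrt := dif_pos hA
  have hmB : msqrt B = hB.sqrt := dif_pos hB
  rw [hmA, hmB]
  set S := hA.sqrt - hB.sqrt with hSdef
  set T := hA.sqrt + hB.sqrt with hTdef
  set M := A - B with hMdef
  have hS : S.IsHermitian := hA.posSemidef_sqrt.1.sub hB.posSemidef_sqrt.1
  have hstar : ∀ X : Matrix (Fin d) (Fin d) ℝ, Xᵀ = star X := fun X => by
    rw [Matrix.star_eq_conjTranspose, Matrix.conjTranspose_eq_transpose_of_trivial]
  -- algebra
  have halg : S * T + T * S = M + M := by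
    have ha := hA.sqrt_mul_self
    have hb := hB.sqrt_mul_self
    simp only [hSdef, hTdef, hMdef, sub_mul, mul_sub, add_mul, mul_add, ha, hb]
    abel
  -- spectral data
  set U : Matrix (Fin d) (Fin d) ℝ := (hS.eigenvectorUnitary : Matrix (Fin d) (Fin d) ℝ) with hUdef
  set μ : Fin d → ℝ := hS.eigenvalues with hμdef
  have hUU : star U * U = 1 := hS.eigenvectorUnitary.2.1
  have hUU' : U * star U = 1 := hS.eigenvectorUnitary.2.2
  have hdiag : star U * S * U = Matrix.diagonal μ := by
    have := hS.conjStarAlgAut_star_eigenvectorUnitary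
    rw [Unitary.conjStarAlgAut_star_apply] at this
    exact this
  have hcancel : ∀ Z : Matrix (Fin d) (Fin d) ℝ, U * (star U * Z) = Z := fun Z => by
    rw [← mul_assoc, hUU', one_mul]
  have hconj_mul : ∀ X Y : Matrix (Fin d) (Fin d) ℝ,
      star U * (X * Y) * U = (star U * X * U) * (star U * Y * U) := by
    intro X Y
    simp only [mul_assoc, hcancel]
  have htrace_conj : ∀ X : Matrix (Fin d) (Fin d) ℝ, (star U * X * U).trace = X.trace := by
    intro X
    rw [Matrix.trace_mul_cycle, hUU', one_mul]
  set T' := star U * T * U with hT'def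
  set M' := star U * M * U with hM'def
  -- diagonal identity
  have hDTTD : Matrix.diagonal μ * T' + T' * Matrix.diagonal μ = M' + M' := by
    have h1 := congrArg (fun X => star U * X * U) halg
    simp only [mul_add, add_mul] at h1
    rw [hconj_mul, hconj_mul, hdiag] at h1
    exact h1
  have hMdiag : ∀ i, M' i i = μ i * T' i i := by
    intro i
    have := congrArg (fun X => X i i) hDTTD
    simp only [Matrix.add_apply, Matrix.diagonal_mul, Matrix.mul_diagonal] at this
    linarith
  -- positivity facts
  have hT'psd : T'.PosSemidef := by
    have hTpsd : T.PosSemidef := hA.posSemidef_sqrt.add hB.posSemidef_sqrt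
    have := hTpsd.conjTranspose_mul_mul_same U
    rwa [← Matrix.star_eq_conjTranspose] at this
  have habs : ∀ i, |μ i| ≤ T' i i := by
    intro i
    have hTpS : (T + S).PosSemidef := by
      have : T + S = hA.sqrt + hA.sqrt := by rw [hTdef, hSdef]; abel
      rw [this]
      exact hA.posSemidef_sqrt.add hA.posSemidef_sqrt
    have hTmS : (T - S).PosSemidef := by
      have : T - S = hB.sqrt + hB.sqrt := by rw [hTdef, hSdef]; abel
      rw [this]
      exact hB.posSemidef_sqrt.add hB.posSemidef_sqrt
    have h1 : (star U * (T + S) * U).PosSemidef := by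
      have := hTpS.conjTranspose_mul_mul_same U
      rwa [← Matrix.star_eq_conjTranspose] at this
    have h2 : (star U * (T - S) * U).PosSemidef := by
      have := hTmS.conjTranspose_mul_mul_same U
      rwa [← Matrix.star_eq_conjTranspose] at this
    have e1 : star U * (T + S) * U = T' + Matrix.diagonal μ := by
      rw [mul_add, add_mul, hdiag]
    have e2 : star U * (T - S) * U = T' - Matrix.diagonal μ := by
      rw [mul_sub, sub_mul, hdiag]
    have d1 := psd_diag_nonneg' (e1 ▸ h1) i
    have d2 := psd_diag_nonneg' (e2 ▸ h2) i
    simp only [Matrix.add_apply, Matrix.sub_apply, Matrix.diagonal_apply_eq] at d1 d2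
    rw [abs_le]; constructor <;> linarith
  -- trace of S^2
  have htr : (S * S).trace = ∑ i, μ i ^ 2 := by
    have h2 : star U * (S * S) * U = Matrix.diagonal μ * Matrix.diagonal μ := by
      rw [hconj_mul, hdiag]
    have := htrace_conj (S * S)
    rw [← this, h2, Matrix.diagonal_mul_diagonal, Matrix.trace_diagonal]
    simp [sq]
  -- Frobenius invariance
  have hfrob_inv : ∑ i, ∑ j, (M' i j) ^ 2 = ∑ i, ∑ j, (M i j) ^ 2 := by
    rw [frob_sq_trace', frob_sq_trace', hstar, hstar]
    rw [hM'def]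
    rw [show star (star U * M * U) = star U * star M * U by
      simp [StarMul.star_mul, mul_assoc]]
    rw [← hconj_mul, htrace_conj]
  set f : ℝ := ∑ i, ∑ j, (M i j) ^ 2 with hfdef
  have hfnn : 0 ≤ f := by positivity
  have key : ∑ i, μ i ^ 2 ≤ Real.sqrt d * Real.sqrt f := by
    have step1 : ∀ i, μ i ^ 2 ≤ |M' i i| := by
      intro i
      rw [hMdiag i, abs_mul, abs_of_nonneg (psd_diag_nonneg' hT'psd i)]
      calc μ i ^ 2 = |μ i| * |μ i| := by rw [← abs_mul, ← sq, abs_of_nonneg (sq_nonneg _)]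
        _ ≤ |μ i| * T' i i := mul_le_mul_of_nonneg_left (habs i) (abs_nonneg _)
    have step2 : ∀ i, |M' i i| ≤ Real.sqrt (∑ j, (M' i j) ^ 2) := by
      intro i
      have h1 : (M' i i) ^ 2 ≤ ∑ j, (M' i j) ^ 2 :=
        Finset.single_le_sum (f := fun j => (M' i j) ^ 2)
          (fun j _ => sq_nonneg _) (Finset.mem_univ i)
      calc |M' i i| = Real.sqrt ((M' i i) ^ 2) := (Real.sqrt_sq_eq_abs _).symm
        _ ≤ _ := Real.sqrt_le_sqrt h1
    have step3 : ∑ i, Real.sqrt (∑ j, (M' i j) ^ 2) ≤ Real.sqrt d * Real.sqrt f := by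
      set g : Fin d → ℝ := fun i => ∑ j, (M' i j) ^ 2 with hgdef
      have hgnn : ∀ i, 0 ≤ g i := fun i => Finset.sum_nonneg fun j _ => sq_nonneg _
      have hcs : (∑ i, Real.sqrt (g i)) ^ 2 ≤ (d : ℝ) * ∑ i, g i := by
        have h := sq_sum_le_card_mul_sum_sq (s := (Finset.univ : Finset (Fin d)))
          (f := fun i => Real.sqrt (g i))
        simp only [Real.sq_sqrt (hgnn _), Finset.card_univ, Fintype.card_fin] at h
        exact_mod_cast h
      have hsum : ∑ i, g i = f := by rw [hgdef, ← hfrob_inv]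
      calc ∑ i, Real.sqrt (g i)
          = Real.sqrt ((∑ i, Real.sqrt (g i)) ^ 2) := by
            rw [Real.sqrt_sq (Finset.sum_nonneg fun i _ => Real.sqrt_nonneg _)]
        _ ≤ Real.sqrt ((d : ℝ) * ∑ i, g i) := Real.sqrt_le_sqrt hcs
        _ = Real.sqrt d * Real.sqrt f := by
            rw [hsum, Real.sqrt_mul (Nat.cast_nonneg d)]
    calc ∑ i, μ i ^ 2 ≤ ∑ i, |M' i i| := Finset.sum_le_sum fun i _ => step1 i
      _ ≤ ∑ i, Real.sqrt (∑ j, (M' i j) ^ 2) := Finset.sum_le_sum fun i _ => step2 i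
      _ ≤ Real.sqrt d * Real.sqrt f := step3
  have hfrobS : frobNorm S = Real.sqrt (∑ i, μ i ^ 2) := by
    rw [frobNorm, frob_sq_trace', hstar, Matrix.star_eq_conjTranspose, hS, htr]
  have hfrobM : frobNorm M = Real.sqrt f := rfl
  calc frobNorm S = Real.sqrt (∑ i, μ i ^ 2) := hfrobS
    _ ≤ Real.sqrt (Real.sqrt d * Real.sqrt f) := Real.sqrt_le_sqrt key
    _ = Real.sqrt (Real.sqrt d) * Real.sqrt (Real.sqrt f) :=
        Real.sqrt_mul (Real.sqrt_nonneg _) _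
    _ = (d : ℝ) ^ ((1 : ℝ) / 4) * (frobNorm M) ^ ((1 : ℝ) / 2) := by
        rw [hfrobM, Real.sqrt_eq_rpow (Real.sqrt f), Real.sqrt_eq_rpow (Real.sqrt (d : ℝ)),
          Real.sqrt_eq_rpow (d : ℝ), ← Real.rpow_mul (Nat.cast_nonneg d)]
        norm_num
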